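/- arXiv:2112.06868 — 3 statements merged into one kernel-verified Lean document; each statement's English description precedes it below -/
import Mathlib

section
/- Let $L_1(\tilde{A}, \tilde{B}, \tilde{\epsilon}) = \frac{1}{2\tilde{\epsilon}^2}\|A - \tilde{A}\tilde{B}A\|_F^2 + \frac{1}{2}\|\tilde{B}A\|_F^2 + (d - r)\log\tilde{\epsilon} + \frac{1}{2}\sum_{i=1}^r(1 + \log(\|\tilde{A}_i\|^2 + \tilde{\epsilon}^2))$. Fix $\delta > 0$, and suppose a sequence $(\tilde{A}_t, \tilde{B}_t, \tilde{\epsilon}_t)$ satisfies: at most $r - d$ columns of each $\tilde{A}_t$ have norm less than $\delta$. Then $\inf_t L_1(\tilde{A}_t, \tilde{B}_t, \tilde{\epsilon}_t) > -\infty$ holds uniformly over $\tilde{\epsilon}_t \in (0, 1]$; more precisely, $(d-r)\log\tilde{\epsilon} + \frac{1}{2}\sum_i(1 + \log(\|\tilde{A}_i\|^2 + \tilde{\epsilon}^2)) \ge \frac{1}{2}\sum_{i : \|\tilde{A}_i\| \ge \delta}(1 + \log(\delta^2 + \tilde{\epsilon}^2))$ whenever at most $r-d$ columns have norm below $\delta$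 and $\tilde{\epsilon} \le 1$. -/
/-!
Columns of norm at least `δ` contribute at least `1 + log (δ² + ε̃²)` each. Each of the
remaining `k ≤ r - d` columns contributes at least `1 + 2 log ε̃`, and the resulting
`k log ε̃` together with `(d - r) log ε̃` is nonnegative, since `d - r + k ≤ 0` and
`log ε̃ ≤ 0`.
-/

open Finset Real

lemma two_mul_log_le_log_add_sq {x ε : ℝ} (hx : 0 ≤ x) (hε : 0 < ε) :
    2 * log ε ≤ log (x + ε ^ 2) := by
  calc 2 * log ε = log (ε ^ 2) := by rw [log_pow]; norm_num
    _ ≤ log (x + ε ^ 2) := log_le_log (by positivity) (by linarith)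

lemma log_sq_add_sq_le_log_add_sq {δ x ε : ℝ} (hδ : 0 < δ) (hε : 0 < ε) (h : δ ≤ √x) :
    log (δ ^ 2 + ε ^ 2) ≤ log (x + ε ^ 2) :=
  log_le_log (by positivity) (by linarith [(le_sqrt' hδ).mp h])

lemma sum_filter_add_card_mul_le_sum_one_add_log {ι : Type*} [Fintype ι]
    (f : ι → ℝ) (hf : ∀ i, 0 ≤ f i) {δ ε : ℝ} (hδ : 0 < δ) (hε : 0 < ε) :
    ∑ _i ∈ univ.filter (fun i => δ ≤ √(f i)), (1 + log (δ ^ 2 + ε ^ 2)) +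
        #(univ.filter fun i => √(f i) < δ) * (1 + 2 * log ε) ≤
      ∑ i, (1 + log (f i + ε ^ 2)) := by
  rw [← sum_filter_add_sum_filter_not univ (fun i => δ ≤ √(f i))]
  simp only [not_le]
  rw [← nsmul_eq_mul, ← sum_const]
  refine add_le_add (sum_le_sum fun i hi => ?_) (sum_le_sum fun i _ => ?_)
  · linarith [log_sq_add_sq_le_log_add_sq hδ hε (mem_filter.mp hi).2]
  · linarith [two_mul_log_le_log_add_sq (hf i) hε]

/-- If at most `r - d` columns of `Ã` have norm below `δ` and `ε̃ ∈ (0,1]`, then the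
`log` terms of the simplified linear VAE loss are bounded below:
`(d-r) log ε̃ + (1/2)∑ᵢ (1 + log(‖Ãᵢ‖² + ε̃²)) ≥ (1/2)∑_{i : ‖Ãᵢ‖ ≥ δ} (1 + log(δ² + ε̃²))`. -/
theorem stmt_9 (d r : ℕ) (δ : ℝ) (hδ : 0 < δ)
    (Atil : Matrix (Fin d) (Fin r) ℝ)
    (ε : ℝ) (hε : 0 < ε) (hε1 : ε ≤ 1)
    (hcols : ((univ.filter fun i : Fin r =>
        Real.sqrt (∑ k, (Atil k i) ^ 2) < δ).card : ℤ) ≤ (r : ℤ) - d) :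
    (1 / 2) * ∑ i ∈ univ.filter
        (fun i : Fin r => δ ≤ Real.sqrt (∑ k, (Atil k i) ^ 2)),
        (1 + Real.log (δ ^ 2 + ε ^ 2)) ≤
      ((d : ℝ) - r) * Real.log ε +
        (1 / 2) * ∑ i, (1 + Real.log ((∑ k, (Atil k i) ^ 2) + ε ^ 2)) := by
  set k : ℕ := #(univ.filter fun i : Fin r => √(∑ j, (Atil j i) ^ 2) < δ)
  have hsum := sum_filter_add_card_mul_le_sum_one_add_log
    (fun i => ∑ j, (Atil j i) ^ 2) (fun i => by positivity) hδ hε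
  have hk : (d : ℝ) - r + k ≤ 0 := by
    have : (k : ℝ) ≤ r - d := by exact_mod_cast hcols
    linarith
  have hlog : log ε ≤ 0 := log_nonpos hε.le hε1
  nlinarith [mul_nonneg_of_nonpos_of_nonpos hk hlog, k.cast_nonneg (α := ℝ)]
end

section
/- Let $A \in \mathbb{R}^{d \times r^*}$ and suppose row $i$ of $A$ is zero. Let $\tilde{A} \in \mathbb{R}^{d \times r}$, $\tilde{B} \in \mathbb{R}^{r \times d}$. Then $\sum_{j=1}^r \tilde{A}_{ij} \frac{\partial}{\partial \tilde{A}_{ij}} \|A - \tilde{A}\tilde{B}A\|_F^2 = 2\,\|(\tilde{A}\tilde{B}A)^{(i)}\|^2 \ge 0$, where $(\tilde{A}\tilde{B}A)^{(i)}$ denotes row $i$ of $\tilde{A}\tilde{B}A$. -/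
/-!
Perturbing `Ã` by `t • Eᵢⱼ` moves the residual `A - ÃB̃A` along `Eᵢⱼ B̃A`, which is supported on
row `i` and carries the row `(B̃A)ⱼ` there, so the partial derivative is
`-2 ∑ₗ (A - ÃB̃A)ᵢₗ (B̃A)ⱼₗ`. As row `i` of `A` vanishes, the residual's row `i` is `-(ÃB̃A)ᵢ`;
weighting by `Ãᵢⱼ` and summing over `j` reassembles `(ÃB̃A)ᵢ = ∑ⱼ Ãᵢⱼ (B̃A)ⱼ`, giving `2‖(ÃB̃A)ᵢ‖²`.
-/

open Finset Matrix

section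

variable {m n : Type*} [Fintype m] [Fintype n]

theorem hasDerivAt_sum_sq_sub_smul (C E : Matrix m n ℝ) (t : ℝ) :
    HasDerivAt (fun s : ℝ => ∑ k, ∑ l, ((C - s • E) k l) ^ 2)
      (-2 * ∑ k, ∑ l, (C - t • E) k l * E k l) t := by
  have hentry : ∀ k l, HasDerivAt (fun s : ℝ => ((C - s • E) k l) ^ 2)
      (-2 * ((C - t • E) k l * E k l)) t := by
    intro k l
    have hlin : HasDerivAt (fun s : ℝ => (C - s • E) k l) (-E k l) t := by
      simpa using ((hasDerivAt_id t).mul_const (E k l)).const_sub (C k l)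
    exact (hlin.fun_pow 2).congr_deriv (by push_cast; ring)
  simp only [Finset.mul_sum]
  exact HasDerivAt.fun_sum fun k _ => HasDerivAt.fun_sum fun l _ => hentry k l

theorem sum_sum_mul_single_one_mul_apply [DecidableEq m] {p : Type*} [Fintype p]
    [DecidableEq p] (C : Matrix m n ℝ) (M : Matrix p n ℝ) (i : m) (j : p) :
    ∑ k, ∑ l, C k l * (single i j (1 : ℝ) * M) k l = ∑ l, C i l * M j l := by
  rw [Finset.sum_eq_single i (fun k _ hk => by simp [single_mul_apply_of_ne _ _ _ _ _ hk])
    (by simp)]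
  simp

end

theorem sum_mul_sum_mul_eq_sum_mul_mul_apply {m n p : Type*} [Fintype n] [Fintype p]
    (X : Matrix m p ℝ) (Y : Matrix m n ℝ) (M : Matrix p n ℝ) (i : m) :
    ∑ j, X i j * ∑ l, Y i l * M j l = ∑ l, Y i l * (X * M) i l := by
  simp only [Finset.mul_sum, mul_apply]
  rw [Finset.sum_comm]
  exact Finset.sum_congr rfl fun l _ => Finset.sum_congr rfl fun j _ => by ring

/-- If row `i` of `A` is zero, then the gradient of the reconstruction term
`‖A - ÃB̃A‖_F²` with respect to row `i` of `Ã` has inner product with that row equal to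
`2‖(ÃB̃A)⁽ⁱ⁾‖² ≥ 0`. The partial derivative `∂/∂Ãᵢⱼ` is expressed as the derivative at `0`
of the perturbation `t ↦ Ã + t·Eᵢⱼ`. -/
theorem stmt_12 (d rstar r : ℕ)
    (A : Matrix (Fin d) (Fin rstar) ℝ)
    (i : Fin d) (hrow : ∀ l, A i l = 0)
    (Atil : Matrix (Fin d) (Fin r) ℝ)
    (Btil : Matrix (Fin r) (Fin d) ℝ) :
    (∑ j, Atil i j *
        deriv (fun t : ℝ =>
          ∑ k, ∑ l, ((A - (Atil + t • (Matrix.single i j 1 : Matrix (Fin d) (Fin r) ℝ)) * Btil * A) k l) ^ 2) 0) =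
      2 * ∑ l, ((Atil * Btil * A) i l) ^ 2 ∧
    0 ≤ 2 * ∑ l, ((Atil * Btil * A) i l) ^ 2 := by
  have hperturb : ∀ (j : Fin r) (t : ℝ),
      A - (Atil + t • (single i j 1 : Matrix (Fin d) (Fin r) ℝ)) * Btil * A =
        (A - Atil * Btil * A) - t • ((single i j 1 : Matrix (Fin d) (Fin r) ℝ) * (Btil * A)) := by
    intro j t
    rw [Matrix.add_mul, Matrix.add_mul, Matrix.smul_mul, Matrix.smul_mul, Matrix.mul_assoc (single i j 1)]
    abel
  have hpartial : ∀ j : Fin r,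
      deriv (fun t : ℝ => ∑ k, ∑ l,
          ((A - (Atil + t • (single i j 1 : Matrix (Fin d) (Fin r) ℝ)) * Btil * A) k l) ^ 2) 0 =
        2 * ∑ l, (Atil * Btil * A) i l * (Btil * A) j l := by
    intro j
    simp_rw [hperturb j]
    rw [(hasDerivAt_sum_sq_sub_smul _ _ 0).deriv, zero_smul, sub_zero,
      sum_sum_mul_single_one_mul_apply]
    simp [hrow, Finset.mul_sum]
  refine ⟨?_, by positivity⟩
  simp_rw [hpartial, mul_left_comm _ (2 : ℝ), ← Finset.mul_sum,
    sum_mul_sum_mul_eq_sum_mul_mul_apply, Matrix.mul_assoc Atil, sq]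
end

section
/- Let $A \in \mathbb{R}^{d \times r^*}$ with row $i$ equal to zero, and let $L_1(\tilde{A}, \tilde{B}, \tilde{\epsilon}) = \frac{1}{2\tilde{\epsilon}^2}\|A - \tilde{A}\tilde{B}A\|_F^2 + \frac{1}{2}\|\tilde{B}A\|_F^2 + (d-r)\log\tilde{\epsilon} + \frac{1}{2}\sum_{k=1}^r(1 + \log(\|\tilde{A}_k\|^2 + \tilde{\epsilon}^2))$. Then $\sum_{j=1}^r \tilde{A}_{ij}\frac{\partial L_1}{\partial \tilde{A}_{ij}} \ge \sum_{j=1}^r \frac{\tilde{A}_{ij}^2}{\|\tilde{A}_j\|^2 + \tilde{\epsilon}^2}$. -/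
/-!
Only the reconstruction term and the log term of `L₁` depend on `Ã`. Since row `i` of `A`
vanishes, the partial derivative of the reconstruction term in `Ãᵢⱼ` is
`ε⁻² ⟨(ÃB̃A)ᵢ, (B̃A)ⱼ⟩`, while the log term contributes `Ãᵢⱼ / (‖Ãⱼ‖² + ε²)`. Weighting by `Ãᵢⱼ`
and summing over `j` turns the first contributions into `ε⁻² ‖(ÃB̃A)ᵢ‖² ≥ 0`.
-/

open Finset Matrix

section

variable {m n p q : Type*} [Fintype m] [Fintype n] [Fintype p] [Fintype q]

noncomputable def reconstructionError (A : Matrix m p ℝ) (B : Matrix q m ℝ) (M : Matrix m q ℝ) :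
    ℝ :=
  ∑ k, ∑ l, ((A - M * B * A) k l) ^ 2

noncomputable def logColumnNorms (c : ℝ) (M : Matrix m q ℝ) : ℝ :=
  ∑ k, (1 + Real.log ((∑ l, (M l k) ^ 2) + c))

theorem hasDerivAt_sum_sq_add_mul (v w : n → ℝ) :
    HasDerivAt (fun t : ℝ => ∑ l, (v l + t * w l) ^ 2) (2 * (v ⬝ᵥ w)) 0 := by
  rw [dotProduct, mul_sum]
  refine HasDerivAt.fun_sum fun l _ => ?_
  simpa [mul_assoc] using (((hasDerivAt_id (0 : ℝ)).mul_const (w l)).const_add (v l)).fun_pow 2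

theorem hasDerivAt_reconstructionError_add_smul (A : Matrix m p ℝ) (B : Matrix q m ℝ)
    (M Q : Matrix m q ℝ) :
    HasDerivAt (fun t : ℝ => reconstructionError A B (M + t • Q))
      (-2 * ∑ k, (A - M * B * A) k ⬝ᵥ (Q * B * A) k) 0 := by
  have hlin (t : ℝ) : A - (M + t • Q) * B * A = (A - M * B * A) + t • -(Q * B * A) := by
    rw [Matrix.add_mul, Matrix.add_mul, Matrix.smul_mul, Matrix.smul_mul]
    module
  have h := HasDerivAt.fun_sum (u := univ) fun k _ =>
    hasDerivAt_sum_sq_add_mul ((A - M * B * A) k) (-(Q * B * A) k)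
  simp only [reconstructionError, hlin, Matrix.add_apply, Matrix.smul_apply, smul_eq_mul]
  simpa [dotProduct_neg, mul_sum] using h

theorem hasDerivAt_logColumnNorms_add_smul {c : ℝ} (hc : 0 < c) (M Q : Matrix m q ℝ) :
    HasDerivAt (fun t : ℝ => logColumnNorms c (M + t • Q))
      (∑ k, 2 * (Mᵀ k ⬝ᵥ Qᵀ k) / ((∑ l, (M l k) ^ 2) + c)) 0 := by
  refine HasDerivAt.fun_sum fun k _ => ?_
  have hpos : 0 < (∑ l, (M l k + 0 * Q l k) ^ 2) + c := by positivity
  have := ((Real.hasDerivAt_log hpos.ne').comp 0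
    ((hasDerivAt_sum_sq_add_mul (Mᵀ k) (Qᵀ k)).add_const c)).const_add 1
  simpa [div_eq_inv_mul] using this

variable [DecidableEq m] [DecidableEq q]

theorem hasDerivAt_reconstructionError_add_single (A : Matrix m p ℝ) (B : Matrix q m ℝ)
    (M : Matrix m q ℝ) {i : m} (hA : ∀ l, A i l = 0) (j : q) :
    HasDerivAt (fun t : ℝ => reconstructionError A B (M + t • single i j 1))
      (2 * ((M * B * A) i ⬝ᵥ (B * A) j)) 0 := by
  convert hasDerivAt_reconstructionError_add_smul A B M (single i j 1) using 1
  have hAi : (A - M * B * A) i = -(M * B * A) i := by ext l; simp [hA]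
  have hrow_i : (single i j (1 : ℝ) * B * A) i = (B * A) j := by ext l; simp [Matrix.mul_assoc]
  have hrow_ne (k : m) (hk : k ≠ i) : (single i j (1 : ℝ) * B * A) k = 0 := by
    ext l; simp [Matrix.mul_assoc, hk]
  rw [sum_eq_single i (fun k _ hk => by rw [hrow_ne k hk, dotProduct_zero]) (by simp), hAi,
    hrow_i, neg_dotProduct]
  ring

theorem hasDerivAt_logColumnNorms_add_single {c : ℝ} (hc : 0 < c) (M : Matrix m q ℝ)
    (i : m) (j : q) :
    HasDerivAt (fun t : ℝ => logColumnNorms c (M + t • single i j 1))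
      (2 * M i j / ((∑ l, (M l j) ^ 2) + c)) 0 := by
  convert hasDerivAt_logColumnNorms_add_smul hc M (single i j 1) using 1
  rw [sum_eq_single j]
  · simp [dotProduct, single_apply]
  · intro k _ hk
    simp [dotProduct, hk.symm]
  · simp

end

theorem sum_mul_dotProduct_row {m n p R : Type*} [Fintype n] [Fintype p] [CommSemiring R]
    (M : Matrix m n R) (N : Matrix n p R) (i : m) (v : p → R) :
    ∑ j, M i j * (v ⬝ᵥ N j) = v ⬝ᵥ (M * N) i := by
  simp only [dotProduct, mul_apply, mul_sum]
  rw [sum_comm]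
  exact sum_congr rfl fun _ _ => sum_congr rfl fun _ _ => by ring

/-- Gradient correlation lemma for the simplified linear VAE loss `L₁`: if row `i` of
`A` is zero then `∑ⱼ Ãᵢⱼ ∂L₁/∂Ãᵢⱼ ≥ ∑ⱼ Ãᵢⱼ²/(‖Ãⱼ‖² + ε̃²)`, where `∂/∂Ãᵢⱼ` is expressed
as the derivative at `0` of the perturbation `t ↦ Ã + t·Eᵢⱼ`. -/
theorem stmt_13 (d rstar r : ℕ)
    (A : Matrix (Fin d) (Fin rstar) ℝ)
    (i : Fin d) (hrow : ∀ l, A i l = 0)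
    (Atil : Matrix (Fin d) (Fin r) ℝ)
    (Btil : Matrix (Fin r) (Fin d) ℝ)
    (ε : ℝ) (hε : 0 < ε)
    (L1 : Matrix (Fin d) (Fin r) ℝ → ℝ)
    (hL1 : ∀ M : Matrix (Fin d) (Fin r) ℝ,
      L1 M = (1 / (2 * ε ^ 2)) * (∑ k, ∑ l, ((A - M * Btil * A) k l) ^ 2) +
        (1 / 2) * (∑ k, ∑ l, ((Btil * A) k l) ^ 2) + ((d : ℝ) - r) * Real.log ε +
        (1 / 2) * ∑ k, (1 + Real.log ((∑ l, (M l k) ^ 2) + ε ^ 2))) :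
    (∑ j, (Atil i j) ^ 2 / ((∑ k, (Atil k j) ^ 2) + ε ^ 2)) ≤
      ∑ j, Atil i j *
        deriv (fun t : ℝ =>
          L1 (Atil + t • (single i j 1 : Matrix (Fin d) (Fin r) ℝ))) 0 := by
  set C := (1 / 2) * (∑ k, ∑ l, ((Btil * A) k l) ^ 2) + ((d : ℝ) - r) * Real.log ε
  have hL (M : Matrix (Fin d) (Fin r) ℝ) :
      L1 M = (1 / (2 * ε ^ 2)) * reconstructionError A Btil M +
        (1 / 2) * logColumnNorms (ε ^ 2) M + C := by
    rw [hL1, reconstructionError, logColumnNorms]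
    ring
  have hpartial (j : Fin r) :
      deriv (fun t : ℝ => L1 (Atil + t • (single i j 1 : Matrix (Fin d) (Fin r) ℝ))) 0 =
        (ε ^ 2)⁻¹ * ((Atil * Btil * A) i ⬝ᵥ (Btil * A) j) +
          Atil i j / ((∑ k, (Atil k j) ^ 2) + ε ^ 2) := by
    simp_rw [hL]
    refine ((((hasDerivAt_reconstructionError_add_single A Btil Atil hrow j).const_mul _).add
      ((hasDerivAt_logColumnNorms_add_single (by positivity) Atil i j).const_mul _)).add_const
      C).deriv.trans ?_
    field_simp
  simp_rw [hpartial, mul_add, sum_add_distrib, mul_left_comm _ (ε ^ 2)⁻¹, ← mul_sum,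
    sum_mul_dotProduct_row, mul_div_assoc', ← sq, Matrix.mul_assoc]
  exact le_add_of_nonneg_left (mul_nonneg (by positivity) (dotProduct_self_star_nonneg _))
end
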